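/- Let n ≥ 3 and let E be a Seidel matrix on X = {1,…,n}. Suppose there exist two distinct points x, y ∈ X such that: for all z, w ∈ X ∖ {x} there is a permutation σ of X with σ(ˣE) = ˣE and σ(z) = w, and for all z, w ∈ X ∖ {y} there is a permutation τ of X with τ(ʸE) = ʸE and τ(z) = w. Then G(E) acts doubly transitively on X: for all pairs (i, j) and (k, l) with i ≠ j and k ≠ l there exists a permutation ρ of X such that ρE is associated to E, ρ(i) = k and ρ(j) = l. -/

import Mathlib

open scoped Classical

/-- A Seidel matrix: symmetric, `1` on the diagonal, entries `±1`. -/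
def IsSeidel {n : ℕ} (E : Matrix (Fin n) (Fin n) ℝ) : Prop :=
  E.IsSymm ∧ (∀ i, E i i = 1) ∧ ∀ i j, E i j = 1 ∨ E i j = -1

/-- Two matrices are associated if `E'ᵢⱼ = νᵢ νⱼ Eᵢⱼ` for some signs `νᵢ ∈ {-1,1}`. -/
def SeidelAssoc {n : ℕ} (E E' : Matrix (Fin n) (Fin n) ℝ) : Prop :=
  ∃ ν : Fin n → ℝ, (∀ i, ν i = 1 ∨ ν i = -1) ∧ ∀ i j, E' i j = ν i * ν j * E i j

/-- Action of a permutation on a matrix: `(σE)ᵢⱼ = E_{σ⁻¹ i, σ⁻¹ j}`. -/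
def permM {n : ℕ} (σ : Equiv.Perm (Fin n)) (E : Matrix (Fin n) (Fin n) ℝ) :
    Matrix (Fin n) (Fin n) ℝ :=
  Matrix.of fun i j => E (σ.symm i) (σ.symm j)

/-- Localization of `E` at the point `j` : `(ʲE)ₖₗ = Eₖⱼ Eₗⱼ Eₖₗ`. -/
def locM {n : ℕ} (E : Matrix (Fin n) (Fin n) ℝ) (j : Fin n) :
    Matrix (Fin n) (Fin n) ℝ :=
  Matrix.of fun k l => E k j * E l j * E k l

/-- The simple graph encoded by a Seidel matrix: two distinct vertices `i, j` are
adjacent iff `Eᵢⱼ = -1` (for a symmetric matrix this is the natural graph). -/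
def seidelGraph {n : ℕ} (E : Matrix (Fin n) (Fin n) ℝ) : SimpleGraph (Fin n) :=
  SimpleGraph.fromRel (fun i j => E i j = -1)

/-! A permutation `σ` fixing `p` lies in `G(E)` as soon as it is a symmetry of the localization
`ᵖE`, because matrices with entries `±1` having the same localization at a point are associated.
A symmetry of `ᵖE` that moves `p` can be made to fix `p`: the columns `p` and `σ p` of `ᵖE` are
all ones, so the transposition of these two points is a symmetry of `ᵖE` as well. Hence the
stabilizers of `x` and `y` in `G(E)` are transitive on `X ∖ {x}` and `X ∖ {y}`; with a third
point this makes `G(E)` transitive, and transitivity together with a point stabilizer transitive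
on the remaining points is double transitivity. -/

section Seidel

variable {n : ℕ}

lemma permM_apply (σ : Equiv.Perm (Fin n)) (E : Matrix (Fin n) (Fin n) ℝ) (i j : Fin n) :
    permM σ E i j = E (σ.symm i) (σ.symm j) := rfl

lemma permM_one (E : Matrix (Fin n) (Fin n) ℝ) : permM 1 E = E := rfl

lemma permM_mul (σ τ : Equiv.Perm (Fin n)) (E : Matrix (Fin n) (Fin n) ℝ) :
    permM (σ * τ) E = permM σ (permM τ E) := rfl

lemma locM_permM (σ : Equiv.Perm (Fin n)) (E : Matrix (Fin n) (Fin n) ℝ) (p : Fin n) :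
    locM (permM σ E) (σ p) = permM σ (locM E p) := by
  ext k l
  simp [locM, permM]

lemma locM_isSymm {E : Matrix (Fin n) (Fin n) ℝ} (hE : E.IsSymm) (p : Fin n) :
    (locM E p).IsSymm := by
  ext k l
  simp only [Matrix.transpose_apply, locM, Matrix.of_apply, hE.apply k l]
  ring

lemma locM_apply_self_right {E : Matrix (Fin n) (Fin n) ℝ} (hE : IsSeidel E) (p k : Fin n) :
    locM E p k p = 1 := by
  simp only [locM, Matrix.of_apply, hE.2.1 p, mul_one]
  exact mul_self_eq_one_iff.mpr (hE.2.2 k p)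

lemma permM_swap_eq_self {F : Matrix (Fin n) (Fin n) ℝ} (hF : F.IsSymm) {p q : Fin n}
    (hp : ∀ k, F k p = 1) (hq : ∀ k, F k q = 1) : permM (Equiv.swap p q) F = F := by
  have hp' : ∀ k, F p k = 1 := fun k => hF.apply k p ▸ hp k
  have hq' : ∀ k, F q k = 1 := fun k => hF.apply k q ▸ hq k
  ext i j
  rw [permM_apply, Equiv.symm_swap, Equiv.swap_apply_def, Equiv.swap_apply_def]
  split_ifs <;> simp_all

lemma seidelAssoc_refl (E : Matrix (Fin n) (Fin n) ℝ) : SeidelAssoc E E :=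
  ⟨fun _ => 1, fun _ => Or.inl rfl, fun _ _ => by ring⟩

lemma SeidelAssoc.symm {E E' : Matrix (Fin n) (Fin n) ℝ} (h : SeidelAssoc E E') :
    SeidelAssoc E' E := by
  obtain ⟨ν, hν, h⟩ := h
  refine ⟨ν, hν, fun i j => ?_⟩
  have hνi := mul_self_eq_one_iff.mpr (hν i)
  have hνj := mul_self_eq_one_iff.mpr (hν j)
  linear_combination (-(ν i * ν j)) * h i j - E i j * ν j * ν j * hνi - E i j * hνj

lemma SeidelAssoc.trans {E E' E'' : Matrix (Fin n) (Fin n) ℝ} (h : SeidelAssoc E E')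
    (h' : SeidelAssoc E' E'') : SeidelAssoc E E'' := by
  obtain ⟨ν, hν, h⟩ := h
  obtain ⟨μ, hμ, h'⟩ := h'
  refine ⟨fun i => ν i * μ i, fun i => mul_self_eq_one_iff.mp ?_, fun i j => ?_⟩
  · linear_combination μ i * μ i * mul_self_eq_one_iff.mpr (hν i) +
      mul_self_eq_one_iff.mpr (hμ i)
  · rw [h' i j, h i j]
    ring

lemma SeidelAssoc.permM {E E' : Matrix (Fin n) (Fin n) ℝ} (σ : Equiv.Perm (Fin n))
    (h : SeidelAssoc E E') : SeidelAssoc (permM σ E) (permM σ E') := by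
  obtain ⟨ν, hν, h⟩ := h
  exact ⟨fun i => ν (σ.symm i), fun i => hν _, fun i j => h _ _⟩

/-- The signs are `νₖ = Eₖₚ E'ₖₚ`. -/
lemma seidelAssoc_of_locM_eq {E E' : Matrix (Fin n) (Fin n) ℝ}
    (hE : ∀ i j, E i j = 1 ∨ E i j = -1) (hE' : ∀ i j, E' i j = 1 ∨ E' i j = -1)
    {p : Fin n} (h : locM E p = locM E' p) : SeidelAssoc E E' := by
  have hsq : ∀ i j, E i j * E i j = 1 := fun i j => mul_self_eq_one_iff.mpr (hE i j)
  have hsq' : ∀ i j, E' i j * E' i j = 1 := fun i j => mul_self_eq_one_iff.mpr (hE' i j)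
  refine ⟨fun k => E k p * E' k p, fun k => mul_self_eq_one_iff.mp ?_, fun k l => ?_⟩
  · linear_combination E' k p * E' k p * hsq k p + hsq' k p
  · have hkl : E k p * E l p * E k l = E' k p * E' l p * E' k l := congrFun (congrFun h k) l
    linear_combination (-(E' k p * E' l p)) * hkl - E' k l * E' k p * E' k p * hsq' l p -
      E' k l * hsq' k p

/-- The group `G(E)`. -/
def seidelGroup (E : Matrix (Fin n) (Fin n) ℝ) : Subgroup (Equiv.Perm (Fin n)) where
  carrier := {σ | SeidelAssoc E (permM σ E)}
  one_mem' := seidelAssoc_refl E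
  mul_mem' {σ τ} hσ hτ := by
    change SeidelAssoc E (permM (σ * τ) E)
    rw [permM_mul]
    exact hσ.trans (hτ.permM σ)
  inv_mem' {σ} hσ := by
    have h := hσ.permM σ⁻¹
    rw [← permM_mul, inv_mul_cancel, permM_one] at h
    exact h.symm

lemma mem_seidelGroup {E : Matrix (Fin n) (Fin n) ℝ} {σ : Equiv.Perm (Fin n)} :
    σ ∈ seidelGroup E ↔ SeidelAssoc E (permM σ E) := Iff.rfl

lemma mem_seidelGroup_of_permM_locM {E : Matrix (Fin n) (Fin n) ℝ} (hE : IsSeidel E)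
    {σ : Equiv.Perm (Fin n)} {p : Fin n} (hσp : σ p = p)
    (hσ : permM σ (locM E p) = locM E p) : σ ∈ seidelGroup E := by
  have hloc : locM (permM σ E) p = locM E p := by
    rw [← hσp, locM_permM, hσp, hσ]
  exact seidelAssoc_of_locM_eq hE.2.2 (fun i j => hE.2.2 _ _) hloc.symm

lemma exists_mem_seidelGroup_fix_of_permM_locM {E : Matrix (Fin n) (Fin n) ℝ} (hE : IsSeidel E)
    {p z w : Fin n} (hz : z ≠ p) (hw : w ≠ p) {σ : Equiv.Perm (Fin n)}
    (hσ : permM σ (locM E p) = locM E p) (hσz : σ z = w) :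
    ∃ ρ ∈ seidelGroup E, ρ p = p ∧ ρ z = w := by
  have hcol : ∀ k, locM E p k (σ p) = 1 := fun k => by
    rw [← hσ, permM_apply, Equiv.symm_apply_apply]
    exact locM_apply_self_right hE _ _
  have hswap : permM (Equiv.swap p (σ p)) (locM E p) = locM E p :=
    permM_swap_eq_self (locM_isSymm hE.1 p) (locM_apply_self_right hE p) hcol
  have hwσ : w ≠ σ p := fun h => hz (σ.injective (hσz.trans h))
  have hfix : (Equiv.swap p (σ p) * σ) p = p := by simp
  refine ⟨Equiv.swap p (σ p) * σ, mem_seidelGroup_of_permM_locM hE hfix ?_, hfix, ?_⟩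
  · rw [permM_mul, hσ, hswap]
  · simp [hσz, Equiv.swap_apply_of_ne_of_ne hw hwσ]

end Seidel

section Transitivity

variable {α : Type*} {H : Subgroup (Equiv.Perm α)}

lemma Subgroup.exists_mem_apply_eq_of_transitive_off {x y c : α} (hxy : x ≠ y) (hcx : c ≠ x)
    (hcy : c ≠ y) (hx : ∀ z w, z ≠ x → w ≠ x → ∃ σ ∈ H, σ z = w)
    (hy : ∀ z w, z ≠ y → w ≠ y → ∃ σ ∈ H, σ z = w) (a : α) : ∃ g ∈ H, g a = x := by
  by_cases hay : a = y
  · obtain ⟨g₁, hg₁, hyc⟩ := hx y c hxy.symm hcx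
    obtain ⟨g₂, hg₂, hcx'⟩ := hy c x hcy hxy
    exact ⟨g₂ * g₁, H.mul_mem hg₂ hg₁, by simp [hay, hyc, hcx']⟩
  · exact hy a x hay hxy

lemma Subgroup.exists_mem_apply_eq_apply_eq {x : α} (htrans : ∀ a, ∃ g ∈ H, g a = x)
    (hx : ∀ z w, z ≠ x → w ≠ x → ∃ σ ∈ H, σ x = x ∧ σ z = w) {i j k l : α} (hij : i ≠ j)
    (hkl : k ≠ l) : ∃ ρ ∈ H, ρ i = k ∧ ρ j = l := by
  obtain ⟨g, hg, hgi⟩ := htrans i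
  obtain ⟨h, hh, hhk⟩ := htrans k
  have hgj : g j ≠ x := hgi ▸ fun e => hij (g.injective e).symm
  have hhl : h l ≠ x := hhk ▸ fun e => hkl (h.injective e).symm
  obtain ⟨s, hs, hsx, hsj⟩ := hx (g j) (h l) hgj hhl
  refine ⟨h⁻¹ * (s * g), H.mul_mem (H.inv_mem hh) (H.mul_mem hs hg), ?_, ?_⟩
  · rw [Equiv.Perm.mul_apply, Equiv.Perm.mul_apply, hgi, hsx, ← hhk, Equiv.Perm.inv_def,
      Equiv.symm_apply_apply]
  · simp [hsj]

end Transitivity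

/-- if for two distinct points `x, y` the automorphism groups of the localized
graphs `ˣΓ` and `ʸΓ` are transitive on `X \ {x}` and `X \ {y}` respectively, then `G(E)` acts
doubly transitively on `X`. -/
theorem doubly_transitive_of_two_points (n : ℕ) (hn : 3 ≤ n)
    (E : Matrix (Fin n) (Fin n) ℝ) (hE : IsSeidel E) (x y : Fin n) (hxy : x ≠ y)
    (hx : ∀ z w : Fin n, z ≠ x → w ≠ x →
      ∃ σ : Equiv.Perm (Fin n), permM σ (locM E x) = locM E x ∧ σ z = w)
    (hy : ∀ z w : Fin n, z ≠ y → w ≠ y →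
      ∃ τ : Equiv.Perm (Fin n), permM τ (locM E y) = locM E y ∧ τ z = w) :
    ∀ i j k l : Fin n, i ≠ j → k ≠ l →
      ∃ ρ : Equiv.Perm (Fin n), SeidelAssoc E (permM ρ E) ∧ ρ i = k ∧ ρ j = l := by
  have stab : ∀ p, (∀ z w : Fin n, z ≠ p → w ≠ p →
      ∃ σ : Equiv.Perm (Fin n), permM σ (locM E p) = locM E p ∧ σ z = w) →
      ∀ z w, z ≠ p → w ≠ p → ∃ ρ ∈ seidelGroup E, ρ p = p ∧ ρ z = w := by
    intro p hp z w hz hw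
    obtain ⟨σ, hσ, hσz⟩ := hp z w hz hw
    exact exists_mem_seidelGroup_fix_of_permM_locM hE hz hw hσ hσz
  have hGx := stab x hx
  have hGy := stab y hy
  obtain ⟨c, hcx, hcy⟩ := Fin.exists_ne_and_ne_of_two_lt x y hn
  have htrans := Subgroup.exists_mem_apply_eq_of_transitive_off hxy hcx hcy
    (fun z w hz hw => (hGx z w hz hw).imp fun _ h => ⟨h.1, h.2.2⟩)
    (fun z w hz hw => (hGy z w hz hw).imp fun _ h => ⟨h.1, h.2.2⟩)
  intro i j k l hij hkl
  obtain ⟨ρ, hρ, hρi, hρj⟩ := Subgroup.exists_mem_apply_eq_apply_eq htrans hGx hij hkl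
  exact ⟨ρ, mem_seidelGroup.mp hρ, hρi, hρj⟩
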